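/- Let D be a POMDP with target set T made absorbing. A vector (p_s) together with binary variables (σ_{z,α}) satisfies constraints: Σ_α σ_{λ(s),α} = 1 for s ∉ T; p_s = 1 for s ∈ T; p_s ≤ (1 − σ_{λ(s),α}) + Σ_{s'} P(s,α,s')·p_{s'} for all s ∉ T and α ∈ Act(s). If additionally T is reachable from every state under every policy, then for the deterministic stationary policy σ encoded by the σ-variables, the maximal feasible value of p_{s_init} equals the probability of reaching T from s_init in the induced DTMC D_σ maximized over all deterministic stationary observation-based policies. -/
import Mathlib


open scoped Classical

/-- A POMDP: transition probabilities, observation function and initial state. -/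
structure POMDP (S O Act : Type*) where
  P : S → Act → S → ℝ
  obs : S → O
  init : S

/-- `n`-step reachability probability in a DTMC. -/
noncomputable def reachN {S : Type*} [Fintype S] (P : S → S → ℝ) (T : Set S) : ℕ → S → ℝ
  | 0, s => if s ∈ T then 1 else 0
  | (n + 1), s => if s ∈ T then 1 else ∑ s' : S, P s s' * reachN P T n s'

/-- Probability of eventually reaching `T` from `s` in a DTMC. -/
noncomputable def reachProb {S : Type*} [Fintype S] (P : S → S → ℝ) (T : Set S) (s : S) : ℝ :=
  ⨆ n, reachN P T n s

/-- Transition matrix of the DTMC induced by a deterministic stationary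
observation-based policy `σ`. -/
def inducedDet {S O Act : Type*} (M : POMDP S O Act) (σ : O → Act) : S → S → ℝ :=
  fun s s' => M.P s (σ (M.obs s)) s'

/-- Feasibility of the MILP constraints for maximal reachability probabilities. -/
def Feasible {S O Act : Type*} [Fintype S] [Fintype Act] (M : POMDP S O Act) (T : Set S)
    (σv : O → Act → ℝ) (p : S → ℝ) : Prop :=
  (∀ z a, σv z a = 0 ∨ σv z a = 1) ∧
  (∀ s, s ∉ T → ∑ a : Act, σv (M.obs s) a = 1) ∧
  (∀ s, 0 ≤ p s ∧ p s ≤ 1) ∧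
  (∀ s ∈ T, p s = 1) ∧
  (∀ s, s ∉ T → ∀ a : Act,
    p s ≤ (1 - σv (M.obs s) a) + ∑ s' : S, M.P s a s' * p s')

section aux
variable {S : Type*} [Fintype S] {P : S → S → ℝ} {T : Set S}

lemma reachN_nonneg (hP : ∀ s s', 0 ≤ P s s') : ∀ n s, 0 ≤ reachN P T n s
  | 0, s => by simp only [reachN]; split <;> norm_num
  | (n+1), s => by
      simp only [reachN]; split
      · norm_num
      · exact Finset.sum_nonneg fun s' _ => mul_nonneg (hP s s') (reachN_nonneg hP n s')

lemma reachN_le_one (hP : ∀ s s', 0 ≤ P s s') (hrow : ∀ s, ∑ s', P s s' = 1) :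
    ∀ n s, reachN P T n s ≤ 1
  | 0, s => by simp only [reachN]; split <;> norm_num
  | (n+1), s => by
      simp only [reachN]; split
      · exact le_refl _
      · calc ∑ s', P s s' * reachN P T n s' ≤ ∑ s', P s s' * 1 :=
            Finset.sum_le_sum fun s' _ =>
              mul_le_mul_of_nonneg_left (reachN_le_one hP hrow n s') (hP s s')
          _ = 1 := by simp [hrow s]

lemma reachN_succ_le (hP : ∀ s s', 0 ≤ P s s') :
    ∀ n s, reachN P T n s ≤ reachN P T (n+1) s
  | 0, s => by
      simp only [reachN]; split
      · exact le_refl _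
      · exact Finset.sum_nonneg fun s' _ => mul_nonneg (hP s s') (reachN_nonneg hP 0 s')
  | (n+1), s => by
      simp only [reachN]; split
      · exact le_refl _
      · exact Finset.sum_le_sum fun s' _ =>
          mul_le_mul_of_nonneg_left (reachN_succ_le hP n s') (hP s s')

lemma reachN_mono (hP : ∀ s s', 0 ≤ P s s') (s : S) :
    Monotone fun n => reachN P T n s :=
  monotone_nat_of_le_succ fun n => reachN_succ_le hP n s

lemma reachN_bdd (hP : ∀ s s', 0 ≤ P s s') (hrow : ∀ s, ∑ s', P s s' = 1) (s : S) :
    BddAbove (Set.range fun n => reachN P T n s) :=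
  ⟨1, by rintro _ ⟨n, rfl⟩; exact reachN_le_one hP hrow n s⟩

lemma reachN_tendsto (hP : ∀ s s', 0 ≤ P s s') (hrow : ∀ s, ∑ s', P s s' = 1) (s : S) :
    Filter.Tendsto (fun n => reachN P T n s) Filter.atTop (nhds (reachProb P T s)) :=
  tendsto_atTop_ciSup (reachN_mono hP s) (reachN_bdd hP hrow s)

lemma reachProb_fix (hP : ∀ s s', 0 ≤ P s s') (hrow : ∀ s, ∑ s', P s s' = 1)
    {s : S} (hs : s ∉ T) :
    reachProb P T s = ∑ s', P s s' * reachProb P T s' := by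
  have h1 : Filter.Tendsto (fun n => reachN P T (n+1) s) Filter.atTop
      (nhds (reachProb P T s)) :=
    (reachN_tendsto hP hrow s).comp (Filter.tendsto_add_atTop_nat 1)
  have h2 : (fun n => reachN P T (n+1) s)
      = fun n => ∑ s', P s s' * reachN P T n s' := by
    funext n; simp only [reachN]; rw [if_neg hs]
  rw [h2] at h1
  have h3 : Filter.Tendsto (fun n => ∑ s', P s s' * reachN P T n s') Filter.atTop
      (nhds (∑ s', P s s' * reachProb P T s')) :=
    tendsto_finset_sum _ fun s' _ => tendsto_const_nhds.mul (reachN_tendsto hP hrow s')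
  exact tendsto_nhds_unique h1 h3

lemma reachN_of_mem {s : S} (hs : s ∈ T) : ∀ n, reachN P T n s = 1
  | 0 => by simp [reachN, hs]
  | (n+1) => by simp [reachN, hs]

lemma reachProb_of_mem {s : S} (hs : s ∈ T) : reachProb P T s = 1 := by
  unfold reachProb
  simp only [reachN_of_mem hs]
  exact ciSup_const

lemma reachProb_nonneg (hP : ∀ s s', 0 ≤ P s s') (hrow : ∀ s, ∑ s', P s s' = 1) (s : S) :
    0 ≤ reachProb P T s :=
  le_trans (reachN_nonneg hP 0 s) (le_ciSup (reachN_bdd hP hrow s) 0)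

lemma reachProb_le_one (hP : ∀ s s', 0 ≤ P s s') (hrow : ∀ s, ∑ s', P s s' = 1) (s : S) :
    reachProb P T s ≤ 1 :=
  ciSup_le fun n => reachN_le_one hP hrow n s

end aux

/-- Direction B: the policy-induced reach probabilities are feasible. -/
lemma reach_feasible {S O Act : Type*} [Fintype S] [Fintype Act]
    (M : POMDP S O Act) (T : Set S)
    (hP : ∀ s a s', 0 ≤ M.P s a s') (hrow : ∀ s a, ∑ s' : S, M.P s a s' = 1)
    (σ : O → Act) :
    Feasible M T (fun z a => if σ z = a then (1:ℝ) else 0)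
      (reachProb (inducedDet M σ) T) := by
  have hQ0 : ∀ s s', 0 ≤ inducedDet M σ s s' := fun s s' => hP s _ s'
  have hQrow : ∀ s, ∑ s', inducedDet M σ s s' = 1 := fun s => hrow s _
  refine ⟨fun z a => ?_, fun s _ => ?_, fun s => ⟨reachProb_nonneg hQ0 hQrow s,
    reachProb_le_one hQ0 hQrow s⟩, fun s hs => reachProb_of_mem hs, fun s hs a => ?_⟩
  · by_cases h : σ z = a <;> simp [h]
  · simp
  · by_cases h : σ (M.obs s) = a
    · subst h
      simp only [if_pos rfl]
      have := reachProb_fix hQ0 hQrow hs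
      rw [this]
      simp [inducedDet]
    · simp only [if_neg h]
      have h1 : reachProb (inducedDet M σ) T s ≤ 1 := reachProb_le_one hQ0 hQrow s
      have h2 : (0:ℝ) ≤ ∑ s' : S, M.P s a s' * reachProb (inducedDet M σ) T s' :=
        Finset.sum_nonneg fun s' _ =>
          mul_nonneg (hP s a s') (reachProb_nonneg hQ0 hQrow s')
      linarith

/-- Direction A: any feasible solution is below some policy value. -/
lemma feasible_le {S O Act : Type*} [Fintype S] [Fintype Act] [Nonempty Act]
    (M : POMDP S O Act) (T : Set S)
    (hP : ∀ s a s', 0 ≤ M.P s a s') (hrow : ∀ s a, ∑ s' : S, M.P s a s' = 1)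
    (hreach : ∀ (σ : O → Act) (s : S),
      ∃ t ∈ T, Relation.ReflTransGen (fun a b => 0 < inducedDet M σ a b) s t)
    {σv : O → Act → ℝ} {p : S → ℝ} (hf : Feasible M T σv p) :
    ∃ σ : O → Act, ∀ s, p s ≤ reachProb (inducedDet M σ) T s := by
  obtain ⟨hbin, hsum, hbd, hT, hcon⟩ := hf
  set σ : O → Act := fun z =>
    if h : ∃ a, σv z a = 1 then h.choose else Classical.arbitrary Act with hσdef
  have hσ : ∀ s, s ∉ T → σv (M.obs s) (σ (M.obs s)) = 1 := by
    intro s hs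
    have hex : ∃ a, σv (M.obs s) a = 1 := by
      by_contra hne
      push_neg at hne
      have h0 : ∑ a : Act, σv (M.obs s) a = 0 :=
        Finset.sum_eq_zero fun a _ => (hbin _ a).resolve_right (hne a)
      rw [hsum s hs] at h0; norm_num at h0
    simp only [hσdef, dif_pos hex]
    exact hex.choose_spec
  refine ⟨σ, ?_⟩
  set Q := inducedDet M σ with hQdef
  have hQ0 : ∀ s s', 0 ≤ Q s s' := fun s s' => hP s _ s'
  have hQrow : ∀ s, ∑ s', Q s s' = 1 := fun s => hrow s _
  set q := reachProb Q T with hqdef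
  have hq1 : ∀ t ∈ T, q t = 1 := fun t ht => reachProb_of_mem ht
  have hdT : ∀ t ∈ T, p t - q t = 0 := fun t ht => by
    rw [hT t ht, hq1 t ht]; ring
  have : Nonempty S := ⟨M.init⟩
  obtain ⟨s₀, -, hmax⟩ := Finset.exists_max_image Finset.univ (fun s => p s - q s)
    ⟨Classical.arbitrary S, Finset.mem_univ _⟩
  set m := p s₀ - q s₀ with hmdef
  have hle : ∀ s, p s - q s ≤ m := fun s => hmax s (Finset.mem_univ s)
  suffices hm : m ≤ 0 by
    intro s
    have := hle s
    linarith
  by_contra hm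
  push_neg at hm
  have hclaim : ∀ s, p s - q s = m → ∀ s', 0 < Q s s' → p s' - q s' = m := by
    intro s hds s' hpos
    have hsT : s ∉ T := by
      intro ht
      have := hdT s ht
      rw [hds] at this
      linarith
    have h1 : p s ≤ ∑ x, Q s x * p x := by
      have hc := hcon s hsT (σ (M.obs s))
      rw [hσ s hsT] at hc
      simpa [hQdef, inducedDet] using hc
    have h2 : q s = ∑ x, Q s x * q x := reachProb_fix hQ0 hQrow hsT
    have hsum0 : ∑ x, Q s x * (m - (p x - q x)) = 0 := by
      have hexp : ∑ x, Q s x * (m - (p x - q x))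
          = m - (∑ x, Q s x * p x - ∑ x, Q s x * q x) := by
        rw [← Finset.sum_sub_distrib]
        have : ∀ x ∈ Finset.univ, Q s x * (m - (p x - q x))
            = Q s x * m - (Q s x * p x - Q s x * q x) := fun x _ => by ring
        rw [Finset.sum_congr rfl this, Finset.sum_sub_distrib, ← Finset.sum_mul,
          hQrow s, one_mul]
      have hgen : ∑ x, Q s x * p x - ∑ x, Q s x * q x ≥ m := by
        have := h1
        rw [← hds, h2] at *
        linarith [h1, h2]
      have hnn : (0:ℝ) ≤ ∑ x, Q s x * (m - (p x - q x)) :=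
        Finset.sum_nonneg fun x _ => mul_nonneg (hQ0 s x) (by linarith [hle x])
      rw [hexp]
      rw [hexp] at hnn
      linarith
    have := (Finset.sum_eq_zero_iff_of_nonneg
      (fun x _ => mul_nonneg (hQ0 s x) (by linarith [hle x]))).mp hsum0 s' (Finset.mem_univ s')
    rcases mul_eq_zero.mp this with h | h
    · exact absurd h (ne_of_gt hpos)
    · linarith
  have hinv : ∀ t, Relation.ReflTransGen (fun a b => 0 < Q a b) s₀ t → p t - q t = m := by
    intro t hpath
    induction hpath with
    | refl => rfl
    | tail _ hedge ih => exact hclaim _ ih _ hedge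
  obtain ⟨t, htT, hpath⟩ := hreach σ s₀
  have hdt : p t - q t = m := hinv t hpath
  have := hdT t htT
  linarith

/-- Correctness of the MILP encoding: if the target set is absorbing and reachable from
every state under every (deterministic stationary observation-based) policy, then the
maximal feasible value of `p_{s_init}` equals the maximal probability of reaching `T`
from the initial state over all deterministic stationary observation-based policies. -/
theorem stmt10 {S O Act : Type*} [Fintype S] [Fintype Act] [Nonempty Act]
    (M : POMDP S O Act) (T : Set S)
    (hP : ∀ s a s', 0 ≤ M.P s a s') (hrow : ∀ s a, ∑ s' : S, M.P s a s' = 1)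
    (habs : ∀ s ∈ T, ∀ a, M.P s a s = 1)
    (hreach : ∀ (σ : O → Act) (s : S),
      ∃ t ∈ T, Relation.ReflTransGen (fun a b => 0 < inducedDet M σ a b) s t) :
    sSup {v | ∃ σv p, Feasible M T σv p ∧ v = p M.init} =
      sSup {v | ∃ σ : O → Act, v = reachProb (inducedDet M σ) T M.init} := by
  set A := {v | ∃ σv p, Feasible M T σv p ∧ v = p M.init} with hA
  set B := {v | ∃ σ : O → Act, v = reachProb (inducedDet M σ) T M.init} with hB
  have hBsub : B ⊆ A := by
    rintro v ⟨σ, rfl⟩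
    exact ⟨_, _, reach_feasible M T hP hrow σ, rfl⟩
  have hAbdd : BddAbove A := by
    refine ⟨1, ?_⟩
    rintro v ⟨σv, p, hf, rfl⟩
    exact (hf.2.2.1 M.init).2
  have hBbdd : BddAbove B := by
    refine ⟨1, ?_⟩
    rintro v ⟨σ, rfl⟩
    exact reachProb_le_one (fun s s' => hP s (σ (M.obs s)) s') (fun s => hrow s (σ (M.obs s))) M.init
  have hBne : B.Nonempty := ⟨_, fun _ => Classical.arbitrary Act, rfl⟩
  have hAne : A.Nonempty := hBne.mono hBsub
  apply le_antisymm
  · apply csSup_le hAne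
    rintro v ⟨σv, p, hf, rfl⟩
    obtain ⟨σ, hle⟩ := feasible_le M T hP hrow hreach hf
    exact le_trans (hle M.init) (le_csSup hBbdd ⟨σ, rfl⟩)
  · exact csSup_le_csSup hAbdd hBne hBsub
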